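/- arXiv:2501.02067 — 2 statements merged into one kernel-verified Lean document; each statement's English description precedes it below -/
import Mathlib

section
/- Let f : ℝⁿ → ℝ ∪ {∞} be lower semicontinuous, x̄ ∈ dom f, v̄ ∈ ℝⁿ, and let μ > κ be real numbers. If d²f(x̄|v̄)(w) ≥ μ‖w‖² for all w ∈ ℝⁿ, then there exists a neighborhood U of x̄ such that f(x) ≥ f(x̄) + ⟨v̄, x − x̄⟩ + (κ/2)‖x − x̄‖² for all x ∈ U. -/
/-!
Write `x = x̄ + t w` with `t = ‖x - x̄‖` and `‖w‖ = 1`. The growth inequality at `x` follows once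
the second-order difference quotient at `(t, w)` exceeds `κ`. Since `κ < μ ≤ d²f(x̄|v̄)(w)`, this
holds for all `(t, w')` with `t > 0` small and `w'` near `w`, and compactness of the unit sphere
makes the bound on `t` uniform in the direction.
-/

open Filter Topology
open scoped RealInnerProductSpace

variable {n : ℕ}

/-- The second-order subderivative `d²f(x|v)(w)`, defined as the lower epigraphical limit
of the second-order difference quotients
`Δ_t²f(x|v)(w') = (f(x + t w') − f(x) − t⟪v, w'⟫)/(t²/2)` as `t ↓ 0`, `w' → w`. -/
noncomputable def secondSubderiv (f : EuclideanSpace ℝ (Fin n) → EReal)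
    (x v w : EuclideanSpace ℝ (Fin n)) : EReal :=
  Filter.liminf
    (fun p : ℝ × EuclideanSpace ℝ (Fin n) =>
      (((2 / p.1 ^ 2 : ℝ) : EReal)) *
        (f (x + p.1 • p.2) - (f x + ((p.1 * ⟪v, p.2⟫ : ℝ) : EReal))))
    ((𝓝[>] (0 : ℝ)) ×ˢ 𝓝 w)

open Metric

section PolarCoordinates

variable {E : Type*} [NormedAddCommGroup E] [NormedSpace ℝ E]

theorem tendsto_norm_sub_smul_nhdsNE (x₀ : E) :
    Tendsto (fun x => (‖x - x₀‖, ‖x - x₀‖⁻¹ • (x - x₀))) (𝓝[≠] x₀)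
      (𝓝[>] (0 : ℝ) ×ˢ 𝓟 (sphere (0 : E) 1)) := by
  have hne : ∀ᶠ x in 𝓝[≠] x₀, x - x₀ ≠ 0 :=
    eventually_nhdsWithin_of_forall fun x hx => sub_ne_zero.2 hx
  refine (tendsto_nhdsWithin_iff.2 ⟨?_, ?_⟩).prodMk (tendsto_principal.2 ?_)
  · simpa using ((continuous_id.sub continuous_const).norm.tendsto' x₀ 0 (by simp)).mono_left
      nhdsWithin_le_nhds
  · exact hne.mono fun x hx => norm_pos_iff.2 hx
  · exact hne.mono fun x hx => mem_sphere_zero_iff_norm.2 (norm_smul_inv_norm hx)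

theorem eventually_nhdsNE_of_forall_mem_sphere [ProperSpace E] {x₀ : E} {P : ℝ × E → Prop}
    (h : ∀ w ∈ sphere (0 : E) 1, ∀ᶠ p in 𝓝[>] (0 : ℝ) ×ˢ 𝓝 w, P p) :
    ∀ᶠ x in 𝓝[≠] x₀, P (‖x - x₀‖, ‖x - x₀‖⁻¹ • (x - x₀)) :=
  (tendsto_norm_sub_smul_nhdsNE x₀).eventually <|
    Eventually.filter_mono (prod_mono le_rfl principal_le_nhdsSet)
      ((isCompact_sphere 0 1).mem_prod_nhdsSet_of_forall h)

end PolarCoordinates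

section SecondDiffQuot

variable {E : Type*} [NormedAddCommGroup E] [InnerProductSpace ℝ E]

noncomputable def secondDiffQuot (f : E → EReal) (x v : E) (t : ℝ) (w : E) : EReal :=
  ((2 / t ^ 2 : ℝ) : EReal) * (f (x + t • w) - (f x + ((t * ⟪v, w⟫ : ℝ) : EReal)))

theorem secondSubderiv_eq_liminf_secondDiffQuot (f : EuclideanSpace ℝ (Fin n) → EReal)
    (x v w : EuclideanSpace ℝ (Fin n)) :
    secondSubderiv f x v w =
      liminf (fun p => secondDiffQuot f x v p.1 p.2) (𝓝[>] (0 : ℝ) ×ˢ 𝓝 w) :=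
  rfl

theorem add_le_of_lt_secondDiffQuot {f : E → EReal} {x v w : E} {κ t : ℝ}
    (h : (κ : EReal) < secondDiffQuot f x v t w) :
    f x + ((t * ⟪v, w⟫ + κ / 2 * t ^ 2 : ℝ) : EReal) ≤ f (x + t • w) := by
  rcases eq_or_ne t 0 with rfl | ht
  · simp
  rw [EReal.coe_add, ← add_assoc]
  by_contra! hlt
  have hcoef : (0 : EReal) ≤ ((2 / t ^ 2 : ℝ) : EReal) := EReal.coe_nonneg.2 (by positivity)
  refine h.not_ge ?_
  calc secondDiffQuot f x v t w
      ≤ ((2 / t ^ 2 : ℝ) : EReal) * ((κ / 2 * t ^ 2 : ℝ) : EReal) :=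
        mul_le_mul_of_nonneg_left (EReal.sub_lt_of_lt_add' hlt).le hcoef
    _ = κ := by rw [← EReal.coe_mul]; congr 1; field_simp

end SecondDiffQuot

theorem quadratic_growth_of_secondSubderiv_ge_general
    (f : EuclideanSpace ℝ (Fin n) → EReal) (x₀ v₀ : EuclideanSpace ℝ (Fin n)) (κ μ : ℝ)
    (hκμ : κ < μ)
    (hd2 : ∀ w, ((μ * ‖w‖ ^ 2 : ℝ) : EReal) ≤ secondSubderiv f x₀ v₀ w) :
    ∀ᶠ x in 𝓝 x₀,
      f x₀ + ((⟪v₀, x - x₀⟫ + κ / 2 * ‖x - x₀‖ ^ 2 : ℝ) : EReal) ≤ f x := by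
  have hdir : ∀ w ∈ sphere (0 : EuclideanSpace ℝ (Fin n)) 1,
      ∀ᶠ p in 𝓝[>] (0 : ℝ) ×ˢ 𝓝 w,
        f x₀ + ((p.1 * ⟪v₀, p.2⟫ + κ / 2 * p.1 ^ 2 : ℝ) : EReal) ≤ f (x₀ + p.1 • p.2) := by
    intro w hw
    have hκ : (κ : EReal) < secondSubderiv f x₀ v₀ w := by
      refine lt_of_lt_of_le ?_ (hd2 w)
      rw [mem_sphere_zero_iff_norm.1 hw, one_pow, mul_one]
      exact EReal.coe_lt_coe_iff.2 hκμ
    rw [secondSubderiv_eq_liminf_secondDiffQuot] at hκ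
    exact (eventually_lt_of_lt_liminf hκ).mono fun p hp => add_le_of_lt_secondDiffQuot hp
  filter_upwards [eventually_nhdsWithin_iff.1 (eventually_nhdsNE_of_forall_mem_sphere hdir)]
    with x hx
  rcases eq_or_ne x x₀ with rfl | hne
  · simp
  have hnorm : ‖x - x₀‖ ≠ 0 := norm_ne_zero_iff.2 (sub_ne_zero.2 hne)
  simpa only [real_inner_smul_right, mul_inv_cancel_left₀ hnorm, smul_inv_smul₀ hnorm,
    add_sub_cancel] using hx hne

/-- If `d²f(x₀|v₀)(w) ≥ μ‖w‖²` for all `w` with `μ > κ`, then the quadratic growth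
condition with modulus `κ` holds on some neighborhood of `x₀`. -/
theorem quadratic_growth_of_secondSubderiv_ge
    (f : EuclideanSpace ℝ (Fin n) → EReal) (x₀ v₀ : EuclideanSpace ℝ (Fin n)) (κ μ : ℝ)
    (hlsc : LowerSemicontinuous f) (hdom : f x₀ ≠ ⊤) (hbot : ∀ x, f x ≠ ⊥)
    (hκμ : κ < μ)
    (hd2 : ∀ w, ((μ * ‖w‖ ^ 2 : ℝ) : EReal) ≤ secondSubderiv f x₀ v₀ w) :
    ∀ᶠ x in 𝓝 x₀,
      f x₀ + ((⟪v₀, x - x₀⟫ + κ / 2 * ‖x - x₀‖ ^ 2 : ℝ) : EReal) ≤ f x :=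
  quadratic_growth_of_secondSubderiv_ge_general f x₀ v₀ κ μ hκμ hd2
end

section
/- Let L be a linear subspace of ℝⁿ, B ∈ ℝⁿˣⁿ a symmetric matrix, λ > 0 and r ≥ 0 with λ < 1/r and ⟨x, Bx⟩ ≥ −r‖x‖² for all x ∈ ℝⁿ. Then the function q(w) := inf_{x ∈ L} { ⟨x, Bx⟩ + (1/λ)‖x − w‖² } is an ordinary quadratic form in w: if L = {0} then q(w) = (1/λ)‖w‖²; otherwise q(w) = ⟨w, Qw⟩ where Q := MBM + (1/λ)(M − I)² with M := (1/λ) C (Cᵀ(B + (1/λ)I)C)⁻¹ Cᵀ, C being any matrix whose columns form an orthogonal basis of L. -/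
/-!
With `A := B + λ⁻¹ I`, the objective expands around any `x̂` as
`q(x̂ + d) = q(x̂) + ⟨d, A d⟩ + 2 ⟨d, A x̂ - λ⁻¹ w⟩`. The bound `⟨x, Bx⟩ ≥ -r‖x‖²` with `rλ < 1`
makes `A` positive definite, so `x̂` minimises over `L` as soon as `x̂ ∈ L` and `A x̂ - λ⁻¹ w ⊥ L`.
For `L = range C` with `C` injective, `Cᵀ A C` is invertible and `x̂ = M w` with
`M = λ⁻¹ C (Cᵀ A C)⁻¹ Cᵀ` satisfies both conditions, since `Cᵀ A M = λ⁻¹ Cᵀ`. As `M` is symmetric,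
`q(M w)` expands to `⟨w, (M B M + λ⁻¹ (M - I)²) w⟩`.
-/

open Matrix

variable {ι κ : Type*} [Fintype ι] [Fintype κ]

theorem Matrix.IsSymm.dotProduct_mulVec_comm {A : Matrix ι ι ℝ} (hA : A.IsSymm) (u v : ι → ℝ) :
    u ⬝ᵥ A *ᵥ v = v ⬝ᵥ A *ᵥ u := by
  rw [dotProduct_mulVec, ← mulVec_transpose, hA.eq, dotProduct_comm]

theorem Matrix.mulVec_injective_of_pairwise_orthogonal {C : Matrix ι κ ℝ}
    (horth : ∀ i j, i ≠ j → C.col i ⬝ᵥ C.col j = 0) (hnz : ∀ i, C.col i ≠ 0) :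
    Function.Injective C.mulVec := by
  rw [mulVec_injective_iff]
  refine .of_comp (WithLp.linearEquiv 2 ℝ (ι → ℝ)).symm.toLinearMap ?_
  refine linearIndependent_of_ne_zero_of_inner_eq_zero (fun i => ?_) fun i j hij => ?_
  · simpa using hnz i
  · simpa [EuclideanSpace.inner_eq_star_dotProduct, dotProduct_comm] using horth i j hij

theorem Matrix.posDef_add_smul_one [DecidableEq ι] {B : Matrix ι ι ℝ} (hB : B.IsSymm) {r c : ℝ}
    (hlow : ∀ x : ι → ℝ, -r * (x ⬝ᵥ x) ≤ x ⬝ᵥ B *ᵥ x) (hrc : r < c) :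
    (B + c • 1).PosDef := by
  refine .of_dotProduct_mulVec_pos (by simpa using hB.add (isSymm_one.smul c)) fun x hx => ?_
  have hxx : 0 < x ⬝ᵥ x := by simpa using dotProduct_star_self_pos_iff.mpr hx
  rw [star_trivial, add_mulVec, smul_mulVec, one_mulVec, dotProduct_add, dotProduct_smul,
    smul_eq_mul]
  nlinarith [hlow x]

section Projection

variable [DecidableEq κ]

theorem transpose_mul_mul_inv_mul_transpose (A : Matrix ι ι ℝ) {C : Matrix ι κ ℝ}
    (hG : IsUnit (Cᵀ * A * C).det) : Cᵀ * A * (C * (Cᵀ * A * C)⁻¹ * Cᵀ) = Cᵀ := by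
  simp only [← Matrix.mul_assoc]
  rw [mul_nonsing_inv _ hG, Matrix.one_mul]

theorem isSymm_mul_inv_mul_transpose {A : Matrix ι ι ℝ} (hA : A.IsSymm) (C : Matrix ι κ ℝ) :
    (C * (Cᵀ * A * C)⁻¹ * Cᵀ).IsSymm := by
  simp [IsSymm, transpose_mul, transpose_nonsing_inv, hA.eq, Matrix.mul_assoc]

end Projection

def proxObjective (B : Matrix ι ι ℝ) (c : ℝ) (w x : ι → ℝ) : ℝ :=
  x ⬝ᵥ B *ᵥ x + c * ((x - w) ⬝ᵥ (x - w))

theorem dotProduct_mulVec_eq_proxObjective [DecidableEq ι] (B : Matrix ι ι ℝ) {M : Matrix ι ι ℝ}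
    (hM : M.IsSymm) (c : ℝ) (w : ι → ℝ) :
    w ⬝ᵥ (M * B * M + c • ((M - 1) * (M - 1))) *ᵥ w = proxObjective B c w (M *ᵥ w) := by
  have hMw : ∀ v, w ⬝ᵥ M *ᵥ v = (M *ᵥ w) ⬝ᵥ v := fun v => by
    rw [hM.dotProduct_mulVec_comm, dotProduct_comm]
  simp only [proxObjective, add_mulVec, smul_mulVec, ← mulVec_mulVec, sub_mulVec, one_mulVec,
    dotProduct_add, dotProduct_smul, dotProduct_sub, hMw, sub_dotProduct, smul_eq_mul]

section Minimisation

variable [DecidableEq ι] {B : Matrix ι ι ℝ} {c : ℝ}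

theorem proxObjective_add (hB : B.IsSymm) (w x d : ι → ℝ) :
    proxObjective B c w (x + d) = proxObjective B c w x + d ⬝ᵥ (B + c • 1) *ᵥ d +
      2 * (d ⬝ᵥ ((B + c • 1) *ᵥ x - c • w)) := by
  simp only [proxObjective, add_mulVec, smul_mulVec, one_mulVec, mulVec_add, dotProduct_add,
    add_dotProduct, dotProduct_sub, sub_dotProduct, dotProduct_smul, smul_eq_mul,
    hB.dotProduct_mulVec_comm x d, add_sub_right_comm x d w, dotProduct_comm (x - w) d]
  ring

theorem isLeast_proxObjective (hB : B.IsSymm) {L : Submodule ℝ (ι → ℝ)}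
    (hnonneg : ∀ d ∈ L, 0 ≤ d ⬝ᵥ (B + c • 1) *ᵥ d) {w x₀ : ι → ℝ} (hx₀ : x₀ ∈ L)
    (hgrad : ∀ d ∈ L, d ⬝ᵥ ((B + c • 1) *ᵥ x₀ - c • w) = 0) :
    IsLeast (proxObjective B c w '' L) (proxObjective B c w x₀) := by
  refine ⟨⟨x₀, hx₀, rfl⟩, ?_⟩
  rintro _ ⟨x, hx, rfl⟩
  have hd : x - x₀ ∈ L := L.sub_mem hx hx₀
  have hexp := proxObjective_add (c := c) hB w x₀ (x - x₀)
  rw [add_sub_cancel, hgrad _ hd] at hexp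
  linarith [hnonneg _ hd]

theorem isLeast_proxObjective_range [DecidableEq κ] (hB : B.IsSymm) (hA : (B + c • 1).PosDef)
    {C : Matrix ι κ ℝ} (hC : Function.Injective C.mulVec) (w : ι → ℝ) :
    IsLeast (proxObjective B c w '' LinearMap.range C.mulVecLin)
      (proxObjective B c w ((c • (C * (Cᵀ * (B + c • 1) * C)⁻¹ * Cᵀ)) *ᵥ w)) := by
  have hG : IsUnit (Cᵀ * (B + c • 1) * C).det := by
    simpa using (hA.conjTranspose_mul_mul_same hC).det_pos.ne'.isUnit
  refine isLeast_proxObjective hB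
    (fun d _ => by simpa using hA.posSemidef.dotProduct_mulVec_nonneg d)
    ⟨c • ((Cᵀ * (B + c • 1) * C)⁻¹ *ᵥ (Cᵀ *ᵥ w)), ?_⟩ ?_
  · simp only [mulVecLin_apply, mulVec_smul, smul_mulVec, mulVec_mulVec, Matrix.mul_assoc]
  · rintro _ ⟨y, rfl⟩
    rw [mulVecLin_apply, ← vecMul_transpose, ← dotProduct_mulVec, mulVec_sub, mulVec_mulVec,
      mulVec_mulVec, Matrix.mul_smul, transpose_mul_mul_inv_mul_transpose _ hG,
      smul_mulVec, mulVec_smul, sub_self, dotProduct_zero]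

end Minimisation

theorem inf_quadratic_over_subspace_general (n : ℕ) (L : Submodule ℝ (Fin n → ℝ))
    (B : Matrix (Fin n) (Fin n) ℝ) (hB : B.IsSymm)
    (lam r : ℝ) (hlam : 0 < lam) (hlr : r * lam < 1)
    (hlow : ∀ x : Fin n → ℝ, -r * (x ⬝ᵥ x) ≤ x ⬝ᵥ B.mulVec x) :
    (L = ⊥ → ∀ w : Fin n → ℝ,
      sInf {s : ℝ | ∃ x ∈ L, s = x ⬝ᵥ B.mulVec x + (1 / lam) * ((x - w) ⬝ᵥ (x - w))} =
        (1 / lam) * (w ⬝ᵥ w)) ∧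
    (∀ (m : ℕ) (C : Matrix (Fin n) (Fin m) ℝ),
      (∀ i j : Fin m, i ≠ j → (C.transpose i) ⬝ᵥ (C.transpose j) = 0) →
      (∀ i : Fin m, C.transpose i ≠ 0) →
      L = Submodule.span ℝ (Set.range fun i : Fin m => C.transpose i) →
      ∀ w : Fin n → ℝ,
        sInf {s : ℝ | ∃ x ∈ L, s = x ⬝ᵥ B.mulVec x + (1 / lam) * ((x - w) ⬝ᵥ (x - w))} =
          w ⬝ᵥ
            (let M : Matrix (Fin n) (Fin n) ℝ :=
              (1 / lam) • (C * (C.transpose * (B + (1 / lam) • (1 : Matrix (Fin n) (Fin n) ℝ)) * C)⁻¹ *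
                C.transpose)
            (M * B * M + (1 / lam) • ((M - 1) * (M - 1))).mulVec w)) := by
  have hset : ∀ w, {s : ℝ | ∃ x ∈ L, s = x ⬝ᵥ B.mulVec x + (1 / lam) * ((x - w) ⬝ᵥ (x - w))} =
      proxObjective B (1 / lam) w '' L := fun w => by
    ext; simp [proxObjective, eq_comm]
  refine ⟨fun hL w => ?_, fun m C horth hnz hL w => ?_⟩
  · simp [hL]
  · have hA := posDef_add_smul_one hB hlow (c := 1 / lam) (by rwa [lt_div_iff₀ hlam])
    have hC := mulVec_injective_of_pairwise_orthogonal horth hnz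
    have hLC : L = LinearMap.range C.mulVecLin := hL.trans (range_mulVecLin C).symm
    have hM : ((1 / lam) • (C * (Cᵀ * (B + (1 / lam) • 1) * C)⁻¹ * Cᵀ)).IsSymm :=
      (isSymm_mul_inv_mul_transpose (hB.add (isSymm_one.smul _)) C).smul _
    rw [hset, hLC, (isLeast_proxObjective_range hB hA hC w).csInf_eq,
      dotProduct_mulVec_eq_proxObjective _ hM]

/-- Moreau-type infimum of a generalized quadratic form over a subspace is an ordinary
quadratic form: with `B` symmetric, `λ > 0`, `r ≥ 0`, `λ < 1/r` (i.e. `r·λ < 1`) and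
`⟨x,Bx⟩ ≥ −r‖x‖²` on `ℝⁿ`, the function `q(w) = inf_{x ∈ L} { ⟨x,Bx⟩ + (1/λ)‖x−w‖² }`
equals `(1/λ)‖w‖²` when `L = {0}`, and equals `⟨w, Qw⟩` with
`Q = MBM + (1/λ)(M−I)²`, `M = (1/λ) C (Cᵀ(B+(1/λ)I)C)⁻¹ Cᵀ`, for any matrix `C` whose
columns form an orthogonal basis of `L`. -/
theorem inf_quadratic_over_subspace (n : ℕ) (L : Submodule ℝ (Fin n → ℝ))
    (B : Matrix (Fin n) (Fin n) ℝ) (hB : B.IsSymm)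
    (lam r : ℝ) (hlam : 0 < lam) (hr : 0 ≤ r) (hlr : r * lam < 1)
    (hlow : ∀ x : Fin n → ℝ, -r * (x ⬝ᵥ x) ≤ x ⬝ᵥ B.mulVec x) :
    (L = ⊥ → ∀ w : Fin n → ℝ,
      sInf {s : ℝ | ∃ x ∈ L, s = x ⬝ᵥ B.mulVec x + (1 / lam) * ((x - w) ⬝ᵥ (x - w))} =
        (1 / lam) * (w ⬝ᵥ w)) ∧
    (∀ (m : ℕ) (C : Matrix (Fin n) (Fin m) ℝ),
      (∀ i j : Fin m, i ≠ j → (C.transpose i) ⬝ᵥ (C.transpose j) = 0) →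
      (∀ i : Fin m, C.transpose i ≠ 0) →
      L = Submodule.span ℝ (Set.range fun i : Fin m => C.transpose i) →
      ∀ w : Fin n → ℝ,
        sInf {s : ℝ | ∃ x ∈ L, s = x ⬝ᵥ B.mulVec x + (1 / lam) * ((x - w) ⬝ᵥ (x - w))} =
          w ⬝ᵥ
            (let M : Matrix (Fin n) (Fin n) ℝ :=
              (1 / lam) • (C * (C.transpose * (B + (1 / lam) • (1 : Matrix (Fin n) (Fin n) ℝ)) * C)⁻¹ *
                C.transpose)
            (M * B * M + (1 / lam) • ((M - 1) * (M - 1))).mulVec w)) :=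
  inf_quadratic_over_subspace_general n L B hB lam r hlam hlr hlow
end
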